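/- Assume r satisfies the ψ-Poisson condition. Then the Jacobiator of the twisted bracket is controlled by dψ: for all ξ, η, ζ ∈ g* and w ∈ g, ([[ξ,η]_{r,ψ}, ζ]_{r,ψ} + [[η,ζ]_{r,ψ}, ξ]_{r,ψ} + [[ζ,ξ]_{r,ψ}, η]_{r,ψ})(w) = dψ(rξ, rη, rζ, w). In particular, if the background ψ is closed (dψ = 0), then the twisted bracket [·,·]_{r,ψ} satisfies the Jacobi identity, i.e. it is a Lie algebra bracket on g*. -/
import Mathlib


/-! The Jacobiator of the `ψ`-twisted bracket is controlled by `dψ`. -/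

section RMatrix

variable {K : Type*} [Field K] [CharZero K] {g : Type*} [LieRing g] [LieAlgebra K g]

/-- Coadjoint action: `(coad x ξ) y = −ξ ⁅x, y⁆`. -/
def coad (x : g) (ξ : Module.Dual K g) : Module.Dual K g :=
  - (ξ ∘ₗ (LieAlgebra.ad K g x : g →ₗ[K] g))

/-- The bracket `[ξ,η]_r = ad*_{rξ} η − ad*_{rη} ξ` on `g*`. -/
def coBr (r : Module.Dual K g →ₗ[K] g) (ξ η : Module.Dual K g) : Module.Dual K g :=
  coad (r ξ) η - coad (r η) ξ

/-- The alternating trilinear form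
`YB_r(ξ,η,ζ) = ζ⁅rξ,rη⁆ + ξ⁅rη,rζ⁆ + η⁅rζ,rξ⁆` on `g*`. -/
def YB (r : Module.Dual K g →ₗ[K] g) (ξ η ζ : Module.Dual K g) : K :=
  ζ ⁅r ξ, r η⁆ + ξ ⁅r η, r ζ⁆ + η ⁅r ζ, r ξ⁆

/-- `ψ(x, y, ·) ∈ g*`, the linear form `z ↦ ψ (x, y, z)`. -/
noncomputable def psiHat (ψ : g [⋀^Fin 3]→ₗ[K] K) (x y : g) : Module.Dual K g :=
  ψ.toMultilinearMap.toLinearMap ![x, y, 0] 2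

/-- The twisted bracket `[ξ,η]_{r,ψ} = [ξ,η]_r − ψ(rξ, rη, ·)` on `g*`. -/
noncomputable def twBr (r : Module.Dual K g →ₗ[K] g) (ψ : g [⋀^Fin 3]→ₗ[K] K)
    (ξ η : Module.Dual K g) : Module.Dual K g :=
  coBr r ξ η - psiHat ψ (r ξ) (r η)

/-- Chevalley–Eilenberg differential of an alternating trilinear form:
`dψ(x₀,x₁,x₂,x₃) = Σ_{0 ≤ i < j ≤ 3} (−1)^{i+j} ψ(⁅x_i,x_j⁆, …)` (omitted
arguments in increasing order). -/
def ceDiff3 (ψ : g [⋀^Fin 3]→ₗ[K] K) (x0 x1 x2 x3 : g) : K :=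
  - ψ ![⁅x0, x1⁆, x2, x3] + ψ ![⁅x0, x2⁆, x1, x3] - ψ ![⁅x0, x3⁆, x1, x2]
    - ψ ![⁅x1, x2⁆, x0, x3] + ψ ![⁅x1, x3⁆, x0, x2] - ψ ![⁅x2, x3⁆, x0, x1]

set_option linter.unusedSectionVars false

lemma coad_apply (x : g) (ξ : Module.Dual K g) (y : g) : coad x ξ y = - ξ ⁅x, y⁆ := rfl

lemma psiHat_apply (ψ : g [⋀^Fin 3]→ₗ[K] K) (x y z : g) :
    psiHat ψ x y z = ψ ![x, y, z] := by
  have h : Function.update ![x, y, (0:g)] 2 z = ![x, y, z] := by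
    funext i; fin_cases i <;> simp [Function.update]
  simp [psiHat, MultilinearMap.toLinearMap_apply, h]

lemma psiHat0_apply (ψ : g [⋀^Fin 3]→ₗ[K] K) (y z x : g) :
    (ψ.toMultilinearMap.toLinearMap ![0, y, z] 0) x = ψ ![x, y, z] := by
  have h : Function.update ![(0:g), y, z] 0 x = ![x, y, z] := by
    funext i; fin_cases i <;> simp [Function.update]
  simp [MultilinearMap.toLinearMap_apply, h]

lemma twBr_apply (r : Module.Dual K g →ₗ[K] g) (ψ : g [⋀^Fin 3]→ₗ[K] K)
    (ξ η : Module.Dual K g) (w : g) :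
    twBr r ψ ξ η w = ξ ⁅r η, w⁆ - η ⁅r ξ, w⁆ - ψ ![r ξ, r η, w] := by
  simp only [twBr, coBr, LinearMap.sub_apply, coad_apply, psiHat_apply]
  ring

lemma psi_swap01 (ψ : g [⋀^Fin 3]→ₗ[K] K) (x y z : g) :
    ψ ![y, x, z] = - ψ ![x, y, z] := by
  have h := ψ.map_swap ![x, y, z] (by decide : (0:Fin 3) ≠ 1)
  have e : ![x, y, z] ∘ Equiv.swap (0:Fin 3) 1 = ![y, x, z] := by
    funext i; fin_cases i <;> simp [Equiv.swap_apply_def]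
  rw [e] at h; exact h

lemma psi_swap12 (ψ : g [⋀^Fin 3]→ₗ[K] K) (x y z : g) :
    ψ ![x, z, y] = - ψ ![x, y, z] := by
  have h := ψ.map_swap ![x, y, z] (by decide : (1:Fin 3) ≠ 2)
  have e : ![x, y, z] ∘ Equiv.swap (1:Fin 3) 2 = ![x, z, y] := by
    funext i; fin_cases i <;> simp [Equiv.swap_apply_def]
  rw [e] at h; exact h

lemma psi_rot (ψ : g [⋀^Fin 3]→ₗ[K] K) (x y z : g) :
    ψ ![z, x, y] = ψ ![x, y, z] := by
  rw [psi_swap01, psi_swap12]; ring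

lemma psi_neg0 (ψ : g [⋀^Fin 3]→ₗ[K] K) (x y z : g) :
    ψ ![-x, y, z] = - ψ ![x, y, z] := by
  have h0 : (![-x, y, z] : Fin 3 → g) = Function.update ![x, y, z] 0 (-x) := by
    funext i; fin_cases i <;> simp [Function.update]
  have h1 : (![x, y, z] : Fin 3 → g) = Function.update ![x, y, z] 0 x := by
    funext i; fin_cases i <;> simp [Function.update]
  rw [h0, show -x = (-1 : K) • x by simp, ψ.map_update_smul, ← h1]
  simp

/-- Key lemma: pairing with `r` of the twisted bracket is pairing with `⁅rξ, rη⁆`. -/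
lemma r_twBr_pair (r : Module.Dual K g →ₗ[K] g)
    (hskew : ∀ ξ η : Module.Dual K g, η (r ξ) = - ξ (r η))
    (ψ : g [⋀^Fin 3]→ₗ[K] K)
    (hpoisson : ∀ ξ η ζ : Module.Dual K g, YB r ξ η ζ = ψ ![r ξ, r η, r ζ])
    (ξ η ν : Module.Dual K g) :
    ν (r (twBr r ψ ξ η)) = ν ⁅r ξ, r η⁆ := by
  rw [hskew (twBr r ψ ξ η) ν, twBr_apply]
  have hp := hpoisson ξ η ν
  simp only [YB] at hp
  have hb : η ⁅r ν, r ξ⁆ = - η ⁅r ξ, r ν⁆ := by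
    rw [show ⁅r ν, r ξ⁆ = -⁅r ξ, r ν⁆ from (lie_skew _ _).symm, map_neg]
  linear_combination -hp + hb

lemma twBr_twBr_apply (r : Module.Dual K g →ₗ[K] g)
    (hskew : ∀ ξ η : Module.Dual K g, η (r ξ) = - ξ (r η))
    (ψ : g [⋀^Fin 3]→ₗ[K] K)
    (hpoisson : ∀ ξ η ζ : Module.Dual K g, YB r ξ η ζ = ψ ![r ξ, r η, r ζ])
    (ξ η ζ : Module.Dual K g) (w : g) :
    twBr r ψ (twBr r ψ ξ η) ζ w =
      - ζ ⁅⁅r ξ, r η⁆, w⁆ + ξ ⁅r η, ⁅r ζ, w⁆⁆ - η ⁅r ξ, ⁅r ζ, w⁆⁆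
        - ψ ![r ξ, r η, ⁅r ζ, w⁆] - ψ ![⁅r ξ, r η⁆, r ζ, w] := by
  rw [twBr_apply, twBr_apply]
  have hθ : ζ ⁅r (twBr r ψ ξ η), w⁆ = ζ ⁅⁅r ξ, r η⁆, w⁆ := by
    have h := r_twBr_pair r hskew ψ hpoisson ξ η (coad w ζ)
    rw [coad_apply, coad_apply] at h
    rw [show ⁅r (twBr r ψ ξ η), w⁆ = -⁅w, r (twBr r ψ ξ η)⁆ from (lie_skew _ _).symm,
        map_neg, show (⁅⁅r ξ, r η⁆, w⁆ : g) = -⁅w, ⁅r ξ, r η⁆⁆ from (lie_skew _ _).symm,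
        map_neg]
    linear_combination h
  have hχ : ψ ![r (twBr r ψ ξ η), r ζ, w] = ψ ![⁅r ξ, r η⁆, r ζ, w] := by
    have h := r_twBr_pair r hskew ψ hpoisson ξ η
      (ψ.toMultilinearMap.toLinearMap ![0, r ζ, w] 0)
    rw [psiHat0_apply, psiHat0_apply] at h
    exact h
  rw [hθ, hχ]
  ring

/-- **The Jacobiator of the twisted bracket is controlled by `dψ`**: if `r`
satisfies the `ψ`-Poisson condition, then for all `ξ η ζ ∈ g*` and `w ∈ g`,
`([[ξ,η]_{r,ψ},ζ]_{r,ψ} + [[η,ζ]_{r,ψ},ξ]_{r,ψ} + [[ζ,ξ]_{r,ψ},η]_{r,ψ})(w)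
  = dψ(rξ, rη, rζ, w)`;
in particular, if `dψ = 0` then `[·,·]_{r,ψ}` satisfies the Jacobi identity,
i.e. it is a Lie algebra bracket on `g*`. -/
theorem twisted_jacobiator_eq_ceDiff
    (r : Module.Dual K g →ₗ[K] g)
    (hskew : ∀ ξ η : Module.Dual K g, η (r ξ) = - ξ (r η))
    (ψ : g [⋀^Fin 3]→ₗ[K] K)
    (hpoisson : ∀ ξ η ζ : Module.Dual K g, YB r ξ η ζ = ψ ![r ξ, r η, r ζ]) :
    (∀ (ξ η ζ : Module.Dual K g) (w : g),
      (twBr r ψ (twBr r ψ ξ η) ζ + twBr r ψ (twBr r ψ η ζ) ξ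
        + twBr r ψ (twBr r ψ ζ ξ) η) w = ceDiff3 ψ (r ξ) (r η) (r ζ) w) ∧
    ((∀ x0 x1 x2 x3 : g, ceDiff3 ψ x0 x1 x2 x3 = 0) →
      ∀ ξ η ζ : Module.Dual K g,
        twBr r ψ (twBr r ψ ξ η) ζ + twBr r ψ (twBr r ψ η ζ) ξ
          + twBr r ψ (twBr r ψ ζ ξ) η = 0) := by
  have main : ∀ (ξ η ζ : Module.Dual K g) (w : g),
      (twBr r ψ (twBr r ψ ξ η) ζ + twBr r ψ (twBr r ψ η ζ) ξ
        + twBr r ψ (twBr r ψ ζ ξ) η) w = ceDiff3 ψ (r ξ) (r η) (r ζ) w := by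
    intro ξ η ζ w
    set a := r ξ with ha
    set b := r η with hb
    set c := r ζ with hc
    rw [LinearMap.add_apply, LinearMap.add_apply,
        twBr_twBr_apply r hskew ψ hpoisson ξ η ζ w,
        twBr_twBr_apply r hskew ψ hpoisson η ζ ξ w,
        twBr_twBr_apply r hskew ψ hpoisson ζ ξ η w]
    simp only [ceDiff3, ← ha, ← hb, ← hc]
    have hJζ : ζ ⁅⁅a, b⁆, w⁆ = ζ ⁅a, ⁅b, w⁆⁆ - ζ ⁅b, ⁅a, w⁆⁆ := by
      rw [lie_lie, map_sub]
    have hJξ : ξ ⁅⁅b, c⁆, w⁆ = ξ ⁅b, ⁅c, w⁆⁆ - ξ ⁅c, ⁅b, w⁆⁆ := by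
      rw [lie_lie, map_sub]
    have hJη : η ⁅⁅c, a⁆, w⁆ = η ⁅c, ⁅a, w⁆⁆ - η ⁅a, ⁅c, w⁆⁆ := by
      rw [lie_lie, map_sub]
    have h1 : ψ ![⁅c, w⁆, a, b] = ψ ![a, b, ⁅c, w⁆] := psi_rot ψ a b ⁅c, w⁆
    have h2 : ψ ![⁅a, w⁆, b, c] = ψ ![b, c, ⁅a, w⁆] := psi_rot ψ b c ⁅a, w⁆
    have h3 : ψ ![c, a, ⁅b, w⁆] = - ψ ![⁅b, w⁆, a, c] := by
      rw [← psi_rot ψ c a ⁅b, w⁆, psi_swap12]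
    have h4 : ψ ![⁅c, a⁆, b, w] = - ψ ![⁅a, c⁆, b, w] := by
      rw [show (⁅c, a⁆ : g) = -⁅a, c⁆ from (lie_skew _ _).symm, psi_neg0]
    linear_combination -hJζ - hJξ - hJη + h1 + h2 - h3 - h4
  refine ⟨main, fun hzero ξ η ζ => ?_⟩
  ext w
  rw [main ξ η ζ w, hzero]
  simp


end RMatrix
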